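/- The projector P := Wig ∘ Op on functions (ZMod 2d)² → ℂ has the explicit form (P f)(m) = (1/4)·Σ_{b∈{0,1}²} (−1)^{b1·m̃2 − b2·m̃1 − b1·b2·d}·f(m − d·b), where (m̃1, m̃2) ∈ ℤ² is any integer representative of m ∈ (ZMod 2d)² (the sign is well defined since the exponent's parity is independent of the choice of representative). -/

import Mathlib

open scoped BigOperators
open Matrix

noncomputable section

/-- `omega n a = exp(2πi a / n)`, the `n`-th roots of unity raised to integer power `a`. -/
def omega (n : ℕ) (a : ℤ) : ℂ := Complex.exp (2 * Real.pi * Complex.I * a / n)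

/-- `Zpow d k = Σ_j ω_d^(k·j) |j⟩⟨j|`, the `k`-th power of the clock operator. -/
def Zpow (d : ℕ) (k : ℤ) : Matrix (ZMod d) (ZMod d) ℂ :=
  Matrix.of fun i j => if i = j then omega d (k * (j.val : ℤ)) else 0

/-- `Xpow d k = Σ_j |j+k⟩⟨j|`, the `k`-th power of the shift operator. -/
def Xpow (d : ℕ) (k : ℤ) : Matrix (ZMod d) (ZMod d) ℂ :=
  Matrix.of fun i j => if i = j + (k : ZMod d) then 1 else 0

/-- The Weyl–Heisenberg displacement operator `V(k) = ω_{2d}^{-k₁k₂} Z^{k₂} X^{k₁}` for `k ∈ ℤ²`. -/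
def Vint (d : ℕ) [NeZero d] (k : ℤ × ℤ) : Matrix (ZMod d) (ZMod d) ℂ :=
  omega (2 * d) (-(k.1 * k.2)) • (Zpow d k.2 * Xpow d k.1)

/-- The WHDO on the doubled phase space `(ZMod (2d))²`. -/
def V (d : ℕ) [NeZero d] (m : ZMod (2 * d) × ZMod (2 * d)) : Matrix (ZMod d) (ZMod d) ℂ :=
  Vint d ((m.1.val : ℤ), (m.2.val : ℤ))

/-- Discrete parity operator `R = Σ_j |-j⟩⟨j|`. -/
def R (d : ℕ) : Matrix (ZMod d) (ZMod d) ℂ :=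
  Matrix.of fun i j => if i = -j then 1 else 0

/-- Doubled phase-point operator `A(m) = V(m)·R`. -/
def A (d : ℕ) [NeZero d] (m : ZMod (2 * d) × ZMod (2 * d)) : Matrix (ZMod d) (ZMod d) ℂ :=
  V d m * R d

variable (d : ℕ) [NeZero d]

/-- Doubled Wigner transform: `Wig[O](m) = (1/(2d)) Tr(A(m)† O)`. -/
def Wig (O : Matrix (ZMod d) (ZMod d) ℂ) (m : ZMod (2 * d) × ZMod (2 * d)) : ℂ :=
  (1 / (2 * (d : ℂ))) * ((A d m)ᴴ * O).trace

/-- Doubled Weyl transform: `Op[f] = (1/2) Σ_m f(m) A(m)`. -/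
def OpW (f : ZMod (2 * d) × ZMod (2 * d) → ℂ) : Matrix (ZMod d) (ZMod d) ℂ :=
  (1 / 2 : ℂ) • ∑ m : ZMod (2 * d) × ZMod (2 * d), f m • A d m

/-- The projector `P = Wig ∘ Op` on functions on the doubled phase space. -/
def P (f : ZMod (2 * d) × ZMod (2 * d) → ℂ) : ZMod (2 * d) × ZMod (2 * d) → ℂ :=
  Wig d (OpW d f)

/-- Inner product on functions on the doubled phase space. -/
def ip (f g : ZMod (2 * d) × ZMod (2 * d) → ℂ) : ℂ :=
  ∑ m : ZMod (2 * d) × ZMod (2 * d), (starRingEnd ℂ) (f m) * g m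

/-- Cross-correlation `(f ⋆ g)(m) = Σ_{m'} conj(f m') g(m'+m)`. -/
def crossCor (f g : ZMod (2 * d) × ZMod (2 * d) → ℂ) (m : ZMod (2 * d) × ZMod (2 * d)) : ℂ :=
  ∑ m' : ZMod (2 * d) × ZMod (2 * d), (starRingEnd ℂ) (f m') * g (m' + m)

/-- The doubling map `ZMod d → ZMod (2d)`, `a ↦ 2a`. -/
def dbl (a : ZMod d) : ZMod (2 * d) := ((2 * a.val : ℕ) : ZMod (2 * d))

/-- The doubling map on the phase space. -/
def dbl2 (α : ZMod d × ZMod d) : ZMod (2 * d) × ZMod (2 * d) := (dbl d α.1, dbl d α.2)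

/-- A stencil `M` is valid if its projection `M̄ = P M` is real-valued (M1),
sums to 1 (M2), and satisfies the autocorrelation condition (M3). -/
def IsValidStencil (M : ZMod (2 * d) × ZMod (2 * d) → ℂ) : Prop :=
  (∀ m, (starRingEnd ℂ) (P d M m) = P d M m) ∧
  (∑ m : ZMod (2 * d) × ZMod (2 * d), P d M m) = 1 ∧
  (∀ α : ZMod d × ZMod d,
    crossCor d (P d M) (P d M) (dbl2 d α) = if α = 0 then 1 else 0)

/-- The `M`-PPO frame generated by a stencil `M`:
`A^M(α) = (1/2) Σ_{m'} M(m') A(m' + 2α)`. -/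
def AM (M : ZMod (2 * d) × ZMod (2 * d) → ℂ) (α : ZMod d × ZMod d) :
    Matrix (ZMod d) (ZMod d) ℂ :=
  (1 / 2 : ℂ) • ∑ m' : ZMod (2 * d) × ZMod (2 * d), M m' • A d (m' + dbl2 d α)

/-- A family of phase-point operators on `(ZMod d)²` is a valid PPO frame if it is
Hermitian (A1), trace-1 (A2), orthogonal (A3), and WHDO-covariant (A4). -/
def IsValidPPOFrame (B : ZMod d × ZMod d → Matrix (ZMod d) (ZMod d) ℂ) : Prop :=
  (∀ α, (B α)ᴴ = B α) ∧
  (∀ α, (B α).trace = 1) ∧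
  (∀ α β, ((B α)ᴴ * B β).trace = if α = β then (d : ℂ) else 0) ∧
  (∀ (k : ℤ × ℤ) (α : ZMod d × ZMod d),
    Vint d k * B α * (Vint d k)ᴴ = B (α + ((k.1 : ZMod d), (k.2 : ZMod d))))

/-- The `M`-Wigner transform: `Wig^M[O](α) = (1/d) Tr(A^M(α)† O)`. -/
def WigM (M : ZMod (2 * d) × ZMod (2 * d) → ℂ) (O : Matrix (ZMod d) (ZMod d) ℂ)
    (α : ZMod d × ZMod d) : ℂ :=
  (1 / (d : ℂ)) * ((AM d M α)ᴴ * O).trace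

/-- The `M`-Weyl transform: `Op^M[f] = Σ_α f(α) A^M(α)`. -/
def OpM (M : ZMod (2 * d) × ZMod (2 * d) → ℂ) (f : ZMod d × ZMod d → ℂ) :
    Matrix (ZMod d) (ZMod d) ℂ :=
  ∑ α : ZMod d × ZMod d, f α • AM d M α

/-- The symplectic discrete Fourier transform. -/
def SDFT (f : ZMod (2 * d) × ZMod (2 * d) → ℂ) (m : ZMod (2 * d) × ZMod (2 * d)) : ℂ :=
  (1 / (2 * (d : ℂ))) * ∑ m' : ZMod (2 * d) × ZMod (2 * d),
    omega (2 * d) (-((m.1.val : ℤ) * (m'.2.val : ℤ) - (m.2.val : ℤ) * (m'.1.val : ℤ))) * f m'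


/-- Coarse-grain-stencil PPO frame: `B(α) = (1/2) Σ_{b∈{0,1}²} A(2α + b)`. -/
def Bcgs (α : ZMod d × ZMod d) : Matrix (ZMod d) (ZMod d) ℂ :=
  (1 / 2 : ℂ) • ∑ b : ZMod 2 × ZMod 2,
    A d (dbl d α.1 + (b.1.val : ZMod (2 * d)), dbl d α.2 + (b.2.val : ZMod (2 * d)))

/-- Momentum basis state `|p⟩ = (1/√d) Σ_j ω_d^{p j} |j⟩`. -/
def pvec (p : ZMod d) : ZMod d → ℂ :=
  fun j => (1 / ((Real.sqrt d : ℝ) : ℂ)) * omega d ((p.val : ℤ) * (j.val : ℤ))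

/-- One-dimensional Dirichlet kernel `K(m) = (1/d) Σ_{t=-(d-1)/2}^{(d-1)/2} ω_{2d}^{t m}`. -/
def Kdir (m : ZMod (2 * d)) : ℂ :=
  (1 / (d : ℂ)) * ∑ t ∈ Finset.Icc (-(((d : ℤ) - 1) / 2)) (((d : ℤ) - 1) / 2),
    omega (2 * d) (t * (m.val : ℤ))

end
section Aux

open Complex

lemma omega_add' (n : ℕ) (a b : ℤ) : omega n (a + b) = omega n a * omega n b := by
  rw [omega, omega, omega, ← Complex.exp_add]
  congr 1
  push_cast
  ring

lemma omega_conj' (n : ℕ) (a : ℤ) : (starRingEnd ℂ) (omega n a) = omega n (-a) := by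
  rw [omega, omega, ← Complex.exp_conj]
  congr 1
  simp only [map_div₀, _root_.map_mul, Complex.conj_I, map_ofNat, Complex.conj_ofReal,
    map_intCast, Complex.conj_natCast]
  push_cast
  ring

lemma omega_pow' (n : ℕ) (a : ℤ) (k : ℕ) : omega n (a * k) = (omega n a) ^ k := by
  induction k with
  | zero => simp [omega]
  | succ k ih =>
    rw [pow_succ, ← ih, ← omega_add']
    congr 1
    push_cast
    ring

lemma omega_intMul_self' (n : ℕ) [NeZero n] (t : ℤ) : omega n (t * n) = 1 := by
  rw [omega]
  have hn : (n : ℂ) ≠ 0 := by exact_mod_cast (NeZero.ne n)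
  have : 2 * (Real.pi:ℂ) * Complex.I * ((t : ℤ) * (n:ℤ) : ℤ) / n = t * (2 * Real.pi * Complex.I) := by
    push_cast; field_simp
  rw [this, Complex.exp_int_mul_two_pi_mul_I]

lemma omega_congr' (n : ℕ) [NeZero n] {a b : ℤ} (h : a ≡ b [ZMOD n]) : omega n a = omega n b := by
  obtain ⟨t, ht⟩ := Int.ModEq.dvd h
  have : b = a + t * n := by linarith [ht]
  rw [this, omega_add', omega_intMul_self', mul_one]

lemma omega_eq_one_iff' (n : ℕ) [NeZero n] (a : ℤ) : omega n a = 1 ↔ (n:ℤ) ∣ a := by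
  constructor
  · intro h
    rw [omega, Complex.exp_eq_one_iff] at h
    obtain ⟨k, hk⟩ := h
    have hn : (n : ℂ) ≠ 0 := by exact_mod_cast (NeZero.ne n)
    have hpi : (Real.pi:ℂ) ≠ 0 := by exact_mod_cast Real.pi_ne_zero
    have : (a : ℂ) = n * k := by
      field_simp at hk
      have h2 : (2:ℂ) * Real.pi * Complex.I ≠ 0 := by
        simp [Real.pi_ne_zero, Complex.I_ne_zero, hpi]
      apply mul_left_cancel₀ h2
      rw [hk]
    exact ⟨k, by exact_mod_cast this⟩
  · rintro ⟨k, rfl⟩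
    rw [show (n:ℤ) * k = k * n by ring]
    exact omega_intMul_self' n k

lemma sum_zmod_val' {d : ℕ} [NeZero d] (g : ℕ → ℂ) :
    ∑ i : ZMod d, g i.val = ∑ k ∈ Finset.range d, g k := by
  apply Finset.sum_nbij' (i := fun (x : ZMod d) => x.val) (j := fun k => (k : ZMod d))
  · intro a _; exact Finset.mem_range.mpr a.val_lt
  · intro a _; exact Finset.mem_univ _
  · intro a _; exact ZMod.natCast_rightInverse a
  · intro a ha; exact ZMod.val_cast_of_lt (Finset.mem_range.mp ha)
  · intro a _; rfl

lemma sum_omega' (d : ℕ) [NeZero d] (c : ℤ) :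
    ∑ i : ZMod d, omega d (c * (i.val : ℤ)) = if (c : ZMod d) = 0 then (d : ℂ) else 0 := by
  have hval : ∑ i : ZMod d, omega d (c * (i.val : ℤ)) = ∑ k ∈ Finset.range d, (omega d c) ^ k := by
    rw [sum_zmod_val' (fun k => omega d (c * (k:ℤ)))]
    exact Finset.sum_congr rfl fun k _ => omega_pow' d c k
  rw [hval]
  have hdvd : (c : ZMod d) = 0 ↔ (d:ℤ) ∣ c := ZMod.intCast_zmod_eq_zero_iff_dvd c d
  by_cases h : (c : ZMod d) = 0
  · rw [if_pos h]
    have h1 : omega d c = 1 := (omega_eq_one_iff' d c).mpr (hdvd.mp h)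
    simp [h1]
  · rw [if_neg h]
    have h1 : omega d c ≠ 1 := fun hh => h (hdvd.mpr ((omega_eq_one_iff' d c).mp hh))
    rw [geom_sum_eq h1]
    have : omega d c ^ d = 1 := by
      rw [← omega_pow']
      exact omega_intMul_self' d c
    rw [this, sub_self, zero_div]

lemma omega_d_mul' (d : ℕ) [NeZero d] (x : ℤ) : omega (2*d) (d * x) = (-1:ℂ)^x := by
  rw [omega, ← Complex.exp_pi_mul_I, ← Complex.exp_int_mul]
  congr 1
  have hd : (d : ℂ) ≠ 0 := by exact_mod_cast NeZero.ne d
  push_cast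
  field_simp

lemma A_apply' (d : ℕ) [NeZero d] (m : ZMod (2*d) × ZMod (2*d)) (i j : ZMod d) :
    A d m i j = omega (2*d) (-((m.1.val:ℤ) * (m.2.val:ℤ))) *
      (if i = -j + ((m.1.val:ℤ) : ZMod d) then omega d ((m.2.val:ℤ) * (i.val:ℤ)) else 0) := by
  simp only [A, V, Vint, R, Zpow, Xpow, Matrix.mul_apply, Matrix.smul_apply, smul_eq_mul,
    Matrix.of_apply, ite_mul, mul_ite, mul_one, mul_zero, zero_mul,
    Finset.sum_ite_eq, Finset.sum_ite_eq', Finset.mem_univ, if_true]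
  split_ifs with h
  · rw [h]
  · rfl

lemma omega_mul_omega (n : ℕ) (a b c : ℤ) (h : a + b = c) :
    omega n a * omega n b = omega n c := by rw [← omega_add', h]

lemma trace_AhA (d : ℕ) [NeZero d] (m m' : ZMod (2*d) × ZMod (2*d)) :
    ((A d m)ᴴ * A d m').trace =
      if (((m'.1.val:ℤ) : ZMod d) = ((m.1.val:ℤ) : ZMod d) ∧
          ((((m'.2.val:ℤ) - (m.2.val:ℤ)) : ℤ) : ZMod d) = 0)
      then omega (2*d) ((m.1.val:ℤ)*(m.2.val:ℤ) - (m'.1.val:ℤ)*(m'.2.val:ℤ)) * d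
      else 0 := by
  classical
  set C : ℂ := omega (2*d) ((m.1.val:ℤ)*(m.2.val:ℤ) - (m'.1.val:ℤ)*(m'.2.val:ℤ)) with hC
  have expand : ((A d m)ᴴ * A d m').trace
      = ∑ i : ZMod d, ∑ j : ZMod d, (starRingEnd ℂ) (A d m j i) * A d m' j i := by
    simp [Matrix.trace, Matrix.diag, Matrix.mul_apply, Matrix.conjTranspose_apply]
  rw [expand]
  have hterm : ∀ i j : ZMod d,
      (starRingEnd ℂ) (A d m j i) * A d m' j i
      = if j = -i + ((m.1.val:ℤ) : ZMod d) then
          (if j = -i + ((m'.1.val:ℤ) : ZMod d) then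
            C * omega d (((m'.2.val:ℤ) - (m.2.val:ℤ)) * (j.val:ℤ)) else 0) else 0 := by
    intro i j
    rw [A_apply', A_apply', _root_.map_mul, omega_conj']
    rw [apply_ite (starRingEnd ℂ), map_zero, omega_conj']
    split_ifs with h1 h2 h3
    · rw [hC]
      rw [show omega (2*d) (-(-((m.1.val:ℤ) * (m.2.val:ℤ)))) * omega d (-((m.2.val:ℤ) * (j.val:ℤ)))
            * (omega (2*d) (-((m'.1.val:ℤ) * (m'.2.val:ℤ))) * omega d ((m'.2.val:ℤ) * (j.val:ℤ)))
          = (omega (2*d) (-(-((m.1.val:ℤ) * (m.2.val:ℤ)))) * omega (2*d) (-((m'.1.val:ℤ) * (m'.2.val:ℤ))))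
            * (omega d (-((m.2.val:ℤ) * (j.val:ℤ))) * omega d ((m'.2.val:ℤ) * (j.val:ℤ))) by ring]
      rw [omega_mul_omega (2*d) (-(-((m.1.val:ℤ) * (m.2.val:ℤ)))) (-((m'.1.val:ℤ) * (m'.2.val:ℤ)))
            ((m.1.val:ℤ)*(m.2.val:ℤ) - (m'.1.val:ℤ)*(m'.2.val:ℤ)) (by ring),
          omega_mul_omega d (-((m.2.val:ℤ) * (j.val:ℤ))) ((m'.2.val:ℤ) * (j.val:ℤ))
            (((m'.2.val:ℤ) - (m.2.val:ℤ)) * (j.val:ℤ)) (by ring)]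
    · ring
    · ring
    · ring
  simp only [hterm]
  simp only [Finset.sum_ite_eq', Finset.mem_univ, if_true, add_right_inj]
  by_cases hu : ((m'.1.val:ℤ) : ZMod d) = ((m.1.val:ℤ) : ZMod d)
  · simp only [hu, if_true]
    have reindex : ∀ i : ZMod d,
        (-i + ((m.1.val:ℤ) : ZMod d)) = ((m.1.val:ℤ) : ZMod d) - i := by
      intro i; rw [sub_eq_neg_add]
    simp only [reindex]
    rw [← Finset.mul_sum]
    rw [Fintype.sum_equiv (Equiv.subLeft (((m.1.val:ℤ) : ZMod d)))
      (fun i => omega d (((m'.2.val:ℤ) - (m.2.val:ℤ)) * ((((m.1.val:ℤ) : ZMod d) - i).val : ℤ)))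
      (fun x => omega d (((m'.2.val:ℤ) - (m.2.val:ℤ)) * ((x.val : ℕ) : ℤ)))
      (fun i => by rw [Equiv.subLeft_apply])]
    rw [sum_omega']
    by_cases hv : ((((m'.2.val:ℤ) - (m.2.val:ℤ)) : ℤ) : ZMod d) = 0
    · simp [hv]
    · simp [hv]
  · have hcond : ¬(((m'.1.val:ℤ) : ZMod d) = ((m.1.val:ℤ) : ZMod d) ∧
        ((((m'.2.val:ℤ) - (m.2.val:ℤ)) : ℤ) : ZMod d) = 0) := fun h => hu h.1
    rw [if_neg hcond]
    have hflip : ¬(((m.1.val:ℤ) : ZMod d) = ((m'.1.val:ℤ) : ZMod d)) := fun h => hu h.symm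
    simp only [hflip, if_false, Finset.sum_const_zero]
lemma val_int_cast' (d : ℕ) [NeZero d] (x : ZMod (2*d)) :
    (((x.val:ℤ)) : ZMod d) = ZMod.castHom (dvd_mul_left d 2) (ZMod d) x := by
  push_cast
  rw [ZMod.castHom_apply, ZMod.natCast_val]

lemma ker_phi (d : ℕ) [NeZero d] (x : ZMod (2*d)) :
    ZMod.castHom (dvd_mul_left d 2) (ZMod d) x = 0 ↔ x = 0 ∨ x = ((d:ℕ) : ZMod (2*d)) := by
  rw [← val_int_cast']
  have hx : (((x.val:ℤ)) : ZMod d) = ((x.val : ℕ) : ZMod d) := by push_cast; rfl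
  rw [hx, ZMod.natCast_eq_zero_iff]
  have hd := Nat.pos_of_ne_zero (NeZero.ne d)
  have hxx : x = ((x.val : ℕ) : ZMod (2*d)) := (ZMod.natCast_rightInverse x).symm
  constructor
  · rintro ⟨k, hk⟩
    have hlt := x.val_lt
    have hk2 : k < 2 := by nlinarith
    interval_cases k
    · left; rw [hxx, hk]; simp
    · right; rw [hxx, hk]; simp
  · rintro (rfl|rfl)
    · simp
    · rw [ZMod.val_cast_of_lt (by omega)]

lemma phase_eq' (d : ℕ) [NeZero d] (m : ZMod (2*d) × ZMod (2*d)) (b : ZMod 2 × ZMod 2) :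
    omega (2*d) ((m.1.val:ℤ)*(m.2.val:ℤ)
        - (((m.1 + ((d*b.1.val : ℕ) : ZMod (2*d))).val:ℤ)) * (((m.2 + ((d*b.2.val : ℕ) : ZMod (2*d))).val:ℤ)))
      = (-1:ℂ)^((b.1.val:ℤ)*(m.2.val:ℤ) - (b.2.val:ℤ)*(m.1.val:ℤ) - (b.1.val:ℤ)*(b.2.val:ℤ)*(d:ℤ)) := by
  rw [← omega_d_mul' d _]
  apply omega_congr'
  apply (ZMod.intCast_eq_intCast_iff _ _ _).mp
  have h2d : ((2*d : ℕ) : ZMod (2*d)) = 0 := ZMod.natCast_self _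
  push_cast at h2d ⊢
  simp only [ZMod.natCast_val, ZMod.intCast_cast, ZMod.cast_id]
  linear_combination (-((ZMod.cast b.1 : ZMod (2*d)) * m.2)) * h2d

lemma bval_lt (d : ℕ) [NeZero d] (b : ZMod 2) : d * b.val < 2*d := by
  have hd := Nat.pos_of_ne_zero (NeZero.ne d)
  have := b.val_lt
  nlinarith

lemma cond_of_eq (d : ℕ) [NeZero d] (m m' : ZMod (2*d) × ZMod (2*d)) (b : ZMod 2 × ZMod 2)
    (h : m' = (m.1 + ((d*b.1.val : ℕ) : ZMod (2*d)), m.2 + ((d*b.2.val : ℕ) : ZMod (2*d)))) :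
    (((m'.1.val:ℤ) : ZMod d) = ((m.1.val:ℤ) : ZMod d) ∧
          ((((m'.2.val:ℤ) - (m.2.val:ℤ)) : ℤ) : ZMod d) = 0) := by
  have hdvd1 : ((d*b.1.val : ℕ) : ZMod d) = 0 := by
    rw [ZMod.natCast_eq_zero_iff]; exact Dvd.intro _ rfl
  have hdvd2 : ((d*b.2.val : ℕ) : ZMod d) = 0 := by
    rw [ZMod.natCast_eq_zero_iff]; exact Dvd.intro _ rfl
  constructor
  · rw [val_int_cast', val_int_cast', h]
    simp only [map_add]
    rw [show (ZMod.castHom (dvd_mul_left d 2) (ZMod d)) ((d*b.1.val : ℕ) : ZMod (2*d))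
        = ((d*b.1.val : ℕ) : ZMod d) by rw [map_natCast], hdvd1, add_zero]
  · rw [show ((((m'.2.val:ℤ) - (m.2.val:ℤ)) : ℤ) : ZMod d)
        = (((m'.2.val:ℤ)) : ZMod d) - (((m.2.val:ℤ)) : ZMod d) by push_cast; ring]
    rw [val_int_cast', val_int_cast', h]
    simp only [map_add]
    rw [show (ZMod.castHom (dvd_mul_left d 2) (ZMod d)) ((d*b.2.val : ℕ) : ZMod (2*d))
        = ((d*b.2.val : ℕ) : ZMod d) by rw [map_natCast], hdvd2, add_zero, sub_self]

lemma gb_inj (d : ℕ) [NeZero d] (b b' : ZMod 2)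
    (h : ((d*b.val : ℕ) : ZMod (2*d)) = ((d*b'.val : ℕ) : ZMod (2*d))) : b = b' := by
  have hd := Nat.pos_of_ne_zero (NeZero.ne d)
  have h1 := ZMod.val_cast_of_lt (bval_lt d b)
  have h2 := ZMod.val_cast_of_lt (bval_lt d b')
  apply ZMod.val_injective
  have : d * b.val = d * b'.val := by rw [← h1, ← h2, h]
  exact Nat.eq_of_mul_eq_mul_left hd this

lemma T_eq (d : ℕ) [NeZero d] (m m' : ZMod (2*d) × ZMod (2*d)) :
    ((A d m)ᴴ * A d m').trace = ∑ b : ZMod 2 × ZMod 2,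
      (if m' = (m.1 + ((d*b.1.val : ℕ) : ZMod (2*d)), m.2 + ((d*b.2.val : ℕ) : ZMod (2*d)))
       then (-1:ℂ)^((b.1.val:ℤ)*(m.2.val:ℤ) - (b.2.val:ℤ)*(m.1.val:ℤ) - (b.1.val:ℤ)*(b.2.val:ℤ)*(d:ℤ)) * d
       else 0) := by
  classical
  have hd := Nat.pos_of_ne_zero (NeZero.ne d)
  rw [trace_AhA]
  by_cases hc : (((m'.1.val:ℤ) : ZMod d) = ((m.1.val:ℤ) : ZMod d) ∧
          ((((m'.2.val:ℤ) - (m.2.val:ℤ)) : ℤ) : ZMod d) = 0)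
  · rw [if_pos hc]
    obtain ⟨h1, h2⟩ := hc
    have k1 : m'.1 - m.1 = 0 ∨ m'.1 - m.1 = ((d:ℕ) : ZMod (2*d)) := by
      rw [← ker_phi, map_sub, sub_eq_zero, ← val_int_cast', ← val_int_cast']
      exact h1
    have k2 : m'.2 - m.2 = 0 ∨ m'.2 - m.2 = ((d:ℕ) : ZMod (2*d)) := by
      rw [← ker_phi, map_sub, sub_eq_zero, ← val_int_cast', ← val_int_cast']
      rw [show ((((m'.2.val:ℤ) - (m.2.val:ℤ)) : ℤ) : ZMod d)
        = (((m'.2.val:ℤ)) : ZMod d) - (((m.2.val:ℤ)) : ZMod d) by push_cast; ring] at h2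
      exact sub_eq_zero.mp h2
    -- choose b0
    set b1 : ZMod 2 := if m'.1 - m.1 = 0 then 0 else 1 with hb1
    set b2 : ZMod 2 := if m'.2 - m.2 = 0 then 0 else 1 with hb2
    have hv1 : ((d*b1.val : ℕ) : ZMod (2*d)) = m'.1 - m.1 := by
      rcases k1 with hk | hk
      · rw [hb1, if_pos hk, hk]; simp
      · have hne : ¬ (m'.1 - m.1 = 0) := by
          rw [hk]; intro h0
          have := ZMod.val_cast_of_lt (show d < 2*d by omega)
          rw [h0] at this; simp at this; omega
        rw [hb1, if_neg hne, hk, show ((1 : ZMod 2)).val = 1 by decide, Nat.mul_one]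
    have hv2 : ((d*b2.val : ℕ) : ZMod (2*d)) = m'.2 - m.2 := by
      rcases k2 with hk | hk
      · rw [hb2, if_pos hk, hk]; simp
      · have hne : ¬ (m'.2 - m.2 = 0) := by
          rw [hk]; intro h0
          have := ZMod.val_cast_of_lt (show d < 2*d by omega)
          rw [h0] at this; simp at this; omega
        rw [hb2, if_neg hne, hk, show ((1 : ZMod 2)).val = 1 by decide, Nat.mul_one]
    have heq : m' = (m.1 + ((d*b1.val : ℕ) : ZMod (2*d)), m.2 + ((d*b2.val : ℕ) : ZMod (2*d))) := by
      rw [hv1, hv2]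
      ext <;> simp
    rw [Finset.sum_eq_single (b1, b2)]
    · rw [if_pos heq, heq]
      simp only
      rw [phase_eq' d m (b1, b2)]
    · intro b _ hb
      rw [if_neg]
      intro hbad
      apply hb
      rw [heq] at hbad
      have e1 : ((d*b1.val : ℕ) : ZMod (2*d)) = ((d*b.1.val : ℕ) : ZMod (2*d)) :=
        add_left_cancel ((Prod.ext_iff.mp hbad).1)
      have e2 : ((d*b2.val : ℕ) : ZMod (2*d)) = ((d*b.2.val : ℕ) : ZMod (2*d)) :=
        add_left_cancel ((Prod.ext_iff.mp hbad).2)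
      have j1 := gb_inj d b1 b.1 e1
      have j2 := gb_inj d b2 b.2 e2
      exact Prod.ext j1.symm j2.symm
    · intro h; exact absurd (Finset.mem_univ _) h
  · rw [if_neg hc]
    symm
    apply Finset.sum_eq_zero
    intro b _
    rw [if_neg]
    intro hbad
    exact hc (cond_of_eq d m m' b hbad)
end Aux

theorem stmt5 (d : ℕ) [NeZero d] (f : ZMod (2 * d) × ZMod (2 * d) → ℂ)
    (m : ZMod (2 * d) × ZMod (2 * d)) :
    P d f m = (1 / 4 : ℂ) * ∑ b : ZMod 2 × ZMod 2,
      (-1 : ℂ) ^ ((b.1.val : ℤ) * (m.2.val : ℤ) - (b.2.val : ℤ) * (m.1.val : ℤ)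
          - (b.1.val : ℤ) * (b.2.val : ℤ) * (d : ℤ)) *
        f (m.1 - ((d * b.1.val : ℕ) : ZMod (2 * d)),
           m.2 - ((d * b.2.val : ℕ) : ZMod (2 * d))) := by
  classical
  have hdc : (d : ℂ) ≠ 0 := by exact_mod_cast NeZero.ne d
  have hP : P d f m = (1/(2*(d:ℂ))) * ((1/2) * ∑ m' : ZMod (2*d) × ZMod (2*d),
      f m' * ((A d m)ᴴ * A d m').trace) := by
    simp only [P, Wig, OpW, Matrix.mul_smul, Matrix.trace_smul, Matrix.mul_sum,
      Matrix.trace_sum, smul_eq_mul]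
  rw [hP]
  have hstep : ∑ m' : ZMod (2*d) × ZMod (2*d), f m' * ((A d m)ᴴ * A d m').trace
      = ∑ b : ZMod 2 × ZMod 2,
          f (m.1 + ((d*b.1.val : ℕ) : ZMod (2*d)), m.2 + ((d*b.2.val : ℕ) : ZMod (2*d))) *
          ((-1:ℂ)^((b.1.val:ℤ)*(m.2.val:ℤ) - (b.2.val:ℤ)*(m.1.val:ℤ)
              - (b.1.val:ℤ)*(b.2.val:ℤ)*(d:ℤ)) * d) := by
    simp only [T_eq d m, Finset.mul_sum, mul_ite, mul_zero]
    rw [Finset.sum_comm]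
    apply Finset.sum_congr rfl
    intro b _
    simp [Finset.sum_ite_eq']
  rw [hstep, Finset.mul_sum, Finset.mul_sum, Finset.mul_sum]
  apply Finset.sum_congr rfl
  intro b _
  have key : ∀ v : ℕ, v < 2 → ((d*v : ℕ) : ZMod (2*d)) = -((d*v : ℕ) : ZMod (2*d)) := by
    intro v hv
    apply eq_neg_of_add_eq_zero_left
    rw [← Nat.cast_add, show d*v + d*v = v * (2*d) by ring, Nat.cast_mul, ZMod.natCast_self,
      mul_zero]
  have hm1 : m.1 + ((d*b.1.val : ℕ) : ZMod (2*d)) = m.1 - ((d*b.1.val : ℕ) : ZMod (2*d)) := by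
    rw [sub_eq_add_neg, ← key b.1.val b.1.val_lt]
  have hm2 : m.2 + ((d*b.2.val : ℕ) : ZMod (2*d)) = m.2 - ((d*b.2.val : ℕ) : ZMod (2*d)) := by
    rw [sub_eq_add_neg, ← key b.2.val b.2.val_lt]
  rw [hm1, hm2]
  field_simp
  ring
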